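/- Crimmins' identity: for bounded linear operators A, B from H to K, R(A) + R(B) = R((AA* + BB*)^{1/2}). -/

import Mathlib

/-!
If `‖S x‖ ≤ c ‖R x‖` for all `x`, then `S = V ∘ R` for a bounded `V` (Douglas): define `V` on the
range of `R`, extend it by continuity to the closure and precompose with the orthogonal projection.
Applied to adjoints, `‖D* y‖ ≤ c ‖T* y‖` gives `R(D) ⊆ R(T)`, so `D D* = T T*` forces
`R(D) = R(T)`. Crimmins' identity is the case `D = C`, `T = [A B] : H ⊕₂ H → K`, where
`T T* = A A* + B B* = C C*` and `R(T) = R(A) + R(B)`.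
-/

open ContinuousLinearMap

variable {H K : Type*} [NormedAddCommGroup H] [InnerProductSpace ℂ H] [CompleteSpace H]
  [NormedAddCommGroup K] [InnerProductSpace ℂ K] [CompleteSpace K]

section

variable {𝕜 E F G : Type*} [RCLike 𝕜]

namespace LinearMap

variable [AddCommGroup E] [Module 𝕜 E]

theorem denseRange_codRestrict_topologicalClosure [NormedAddCommGroup G] [NormedSpace 𝕜 G]
    (R : E →ₗ[𝕜] G) :
    DenseRange (R.codRestrict (range R).topologicalClosure
      fun x => (range R).le_topologicalClosure (mem_range_self R x)) := by
  rw [DenseRange, Subtype.dense_iff, ← Set.range_comp]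
  exact (Submodule.topologicalClosure_coe _).le

theorem exists_comp_eq_of_norm_le [NormedAddCommGroup F] [NormedSpace 𝕜 F] [CompleteSpace F]
    [NormedAddCommGroup G] [InnerProductSpace 𝕜 G] [CompleteSpace G]
    (S : E →ₗ[𝕜] F) (R : E →ₗ[𝕜] G) (c : ℝ) (h : ∀ x, ‖S x‖ ≤ c * ‖R x‖) :
    ∃ V : G →L[𝕜] F, (V : G →ₗ[𝕜] F) ∘ₗ R = S := by
  set N := (range R).topologicalClosure
  have hRN : ∀ x, R x ∈ N := fun x => (range R).le_topologicalClosure (mem_range_self R x)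
  refine ⟨S.extendOfNorm (R.codRestrict N hRN) ∘L N.orthogonalProjectionOnto, ?_⟩
  ext x
  have hproj : N.orthogonalProjectionOnto (R x) = R.codRestrict N hRN x :=
    Submodule.orthogonalProjectionOnto_mem_subspace_eq_self (⟨R x, hRN x⟩ : N)
  simp only [comp_apply, ContinuousLinearMap.coe_coe, ContinuousLinearMap.comp_apply, hproj]
  exact extendOfNorm_eq R.denseRange_codRestrict_topologicalClosure ⟨c, h⟩ x

end LinearMap

namespace ContinuousLinearMap

variable [NormedAddCommGroup E] [InnerProductSpace 𝕜 E]
  [NormedAddCommGroup F] [InnerProductSpace 𝕜 F] [NormedAddCommGroup G] [InnerProductSpace 𝕜 G]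

def coprodL2 (A : E →L[𝕜] G) (B : F →L[𝕜] G) : WithLp 2 (E × F) →L[𝕜] G :=
  A.coprod B ∘L WithLp.prodContinuousLinearEquiv 2 𝕜 E F

theorem range_coprodL2 (A : E →L[𝕜] G) (B : F →L[𝕜] G) :
    LinearMap.range (A.coprodL2 B : WithLp 2 (E × F) →ₗ[𝕜] G) =
      LinearMap.range (A : E →ₗ[𝕜] G) ⊔ LinearMap.range (B : F →ₗ[𝕜] G) := by
  rw [← LinearMap.range_coprod]
  exact LinearMap.range_comp_of_range_eq_top _ (LinearEquiv.range _)

variable [CompleteSpace E] [CompleteSpace F] [CompleteSpace G]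

theorem adjoint_coprodL2 (A : E →L[𝕜] G) (B : F →L[𝕜] G) :
    adjoint (A.coprodL2 B) =
      (WithLp.prodContinuousLinearEquiv 2 𝕜 E F).symm.toContinuousLinearMap ∘L
        (adjoint A).prod (adjoint B) := by
  refine ((eq_adjoint_iff _ _).mpr fun y z => ?_).symm
  simp [coprodL2, inner_add_right, adjoint_inner_left]

theorem coprodL2_comp_adjoint (A : E →L[𝕜] G) (B : F →L[𝕜] G) :
    A.coprodL2 B ∘L adjoint (A.coprodL2 B) = A ∘L adjoint A + B ∘L adjoint B := by
  rw [adjoint_coprodL2]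
  ext y
  simp [coprodL2]

theorem range_le_range_of_norm_adjoint_apply_le (D : E →L[𝕜] F) (T : G →L[𝕜] F) (c : ℝ)
    (h : ∀ y, ‖adjoint D y‖ ≤ c * ‖adjoint T y‖) :
    LinearMap.range (D : E →ₗ[𝕜] F) ≤ LinearMap.range (T : G →ₗ[𝕜] F) := by
  obtain ⟨V, hV⟩ := LinearMap.exists_comp_eq_of_norm_le
    (adjoint D : F →ₗ[𝕜] E) (adjoint T : F →ₗ[𝕜] G) c h
  have hV' : V ∘L adjoint T = adjoint D := coe_injective hV
  have hD : T ∘L adjoint V = D := by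
    rw [← adjoint_adjoint D, ← hV', adjoint_comp, adjoint_adjoint]
  rw [← hD, toLinearMap_comp]
  exact LinearMap.range_comp_le_range _ _

theorem norm_adjoint_apply_sq (T : E →L[𝕜] F) (y : F) :
    ‖adjoint T y‖ ^ 2 = RCLike.re (inner 𝕜 ((T ∘L adjoint T) y) y) := by
  simpa using (adjoint T).apply_norm_sq_eq_inner_adjoint_left y

theorem range_eq_range_of_comp_adjoint_eq (D : E →L[𝕜] F) (T : G →L[𝕜] F)
    (h : D ∘L adjoint D = T ∘L adjoint T) :
    LinearMap.range (D : E →ₗ[𝕜] F) = LinearMap.range (T : G →ₗ[𝕜] F) := by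
  have hnorm : ∀ y, ‖adjoint D y‖ = ‖adjoint T y‖ := fun y => by
    rw [← sq_eq_sq₀ (norm_nonneg _) (norm_nonneg _), norm_adjoint_apply_sq,
      norm_adjoint_apply_sq, h]
  exact le_antisymm
    (range_le_range_of_norm_adjoint_apply_le D T 1 fun y => by rw [hnorm, one_mul])
    (range_le_range_of_norm_adjoint_apply_le T D 1 fun y => by rw [hnorm, one_mul])

end ContinuousLinearMap

end

theorem crimmins (A B : H →L[ℂ] K) (C : K →L[ℂ] K)
    (hC : C.IsPositive) (hC2 : C ∘L C = A ∘L adjoint A + B ∘L adjoint B) :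
    LinearMap.range (A : H →ₗ[ℂ] K) ⊔ LinearMap.range (B : H →ₗ[ℂ] K) = LinearMap.range (C : K →ₗ[ℂ] K) := by
  have hCC : C ∘L adjoint C = A.coprodL2 B ∘L adjoint (A.coprodL2 B) := by
    rw [hC.isSelfAdjoint.adjoint_eq, hC2, coprodL2_comp_adjoint]
  rw [← range_coprodL2, range_eq_range_of_comp_adjoint_eq C _ hCC]
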